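/- Let J be a nonempty finite set, let u ∈ ℤ^J, and let A₁ < A₂ be real numbers. Let φ be a holomorphic function on the open strip { z ∈ ℂ^J : A₁ < Re(z_j) < A₂ for all j ∈ J }, and suppose that for every compact set K ⊆ (A₁, A₂) there exist constants A ≥ 0 and C > 0 such that |φ(z + i t u)| ≤ C · (1 + ‖z‖)^A · (1 + t²)^{−1} whenever Re(z_j) ∈ K for all j ∈ J and t ∈ ℝ. Then: (i) for every such z the integral ψ(z) := (2π)^{−1} ∫_ℝ φ(z + i t u) dt converges absolutely; (ii) ψ is holomorphic on the same open strip; (iii) ψ is polynomially bounded in vertical strips, i.e. for every compact K ⊆ (A₁, A₂) there exist A′ ≥ 0 and C′ > 0 with |ψ(z)| ≤ C′ · (1 + ‖z‖)^{A′} whenever Re(z_j) ∈ K for all j; and (iv) ψ is invariant under translation by ℂ·u, i.e. ψ(z + s u) = ψ(z) for every s ∈ ℂ such that both Re(z_j) and Re(z_j + s u_j) lie in (A₁, A₂) for all j ∈ J. -/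

import Mathlib

/-!
For base points `z` in a compact subset of the strip, the growth hypothesis bounds
`φ (z + i t u)` uniformly by `B (1 + t²)⁻¹`, which is integrable. The Cauchy estimate turns this
into the same kind of bound for the derivative of `φ`, so one may differentiate under the integral
sign. For the invariance, `w ↦ φ (z + w u)` is holomorphic in one variable: the imaginary part of
`s` is absorbed by translating `t`, and the real part by shifting the line of integration, which
Cauchy's theorem on rectangles allows since the horizontal sides decay.
-/

open MeasureTheory

/-- The open vertical strip `{z ∈ ℂ^J : A₁ < Re z_j < A₂ for all j}`. -/
def strip {J : Type*} (A₁ A₂ : ℝ) : Set (J → ℂ) :=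
  {z | ∀ j, (z j).re ∈ Set.Ioo A₁ A₂}

/-- The shifted integral `ψ(z) := (2π)⁻¹ ∫_ℝ φ(z + i t u) dt`. -/
noncomputable def shiftedIntegral {J : Type*} [Fintype J] (u : J → ℤ)
    (φ : (J → ℂ) → ℂ) (z : J → ℂ) : ℂ :=
  (2 * Real.pi : ℝ)⁻¹ * ∫ t : ℝ, φ (fun j => z j + (t : ℂ) * (u j : ℂ) * Complex.I)

open Metric Set Filter Topology Complex
open scoped Interval Real

section HolomorphicParametricIntegral

variable {E F : Type*} [NormedAddCommGroup E] [NormedSpace ℂ E] [NormedAddCommGroup F]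
  [NormedSpace ℂ F]

theorem norm_fderiv_le_of_forall_mem_ball_norm_le {f : E → F} {c : E} {r M : ℝ} (hr : 0 < r)
    (hf : DifferentiableOn ℂ f (ball c r)) (hM : ∀ w ∈ ball c r, ‖f w‖ ≤ M) :
    ‖fderiv ℂ f c‖ ≤ 2 * M / r := by
  refine norm_fderiv_le_div_of_mapsTo_ball hf (fun w hw => ?_) hr
  rw [mem_closedBall, dist_eq_norm]
  calc ‖f w - f c‖ ≤ ‖f w‖ + ‖f c‖ := norm_sub_le _ _
    _ ≤ 2 * M := by linarith [hM w hw, hM c (mem_ball_self hr)]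

/-- The Cauchy estimate turns the bound `g` on `f` along the translates into the bound `4 g / r`
on `fderiv ℂ f` over the half ball, which dominates the differentiated integrand. -/
theorem differentiableAt_integral_add_of_dominated {α : Type*} [TopologicalSpace α]
    [MeasurableSpace α] [OpensMeasurableSpace α] {μ : Measure α} [FiniteDimensional ℂ E]
    [MeasurableSpace E] [BorelSpace E] [CompleteSpace F] [SecondCountableTopology F]
    {f : E → F} {γ : α → E} {g : α → ℝ} {x₀ : E} {r : ℝ} (hγ : Continuous γ) (hr : 0 < r)
    (hf : ∀ a, ∀ x ∈ ball x₀ r, DifferentiableAt ℂ f (x + γ a))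
    (hfg : ∀ a, ∀ x ∈ ball x₀ r, ‖f (x + γ a)‖ ≤ g a) (hg : Integrable g μ) :
    DifferentiableAt ℂ (fun x => ∫ a, f (x + γ a) ∂μ) x₀ := by
  have hr2 : 0 < r / 2 := half_pos hr
  have hsub : ∀ a, ∀ x ∈ ball x₀ (r / 2), ∀ w ∈ ball (x + γ a) (r / 2), w - γ a ∈ ball x₀ r := by
    intro a x hx w hw
    rw [mem_ball] at hx hw ⊢
    calc dist (w - γ a) x₀ ≤ dist (w - γ a) x + dist x x₀ := dist_triangle _ _ _
      _ = dist w (x + γ a) + dist x x₀ := by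
          rw [dist_eq_norm, dist_eq_norm w, sub_sub, add_comm (γ a)]
      _ < r / 2 + r / 2 := add_lt_add hw hx
      _ = r := add_halves r
  have hcont : ∀ x ∈ ball x₀ r, Continuous fun a => f (x + γ a) := fun x hx =>
    continuous_iff_continuousAt.2 fun a =>
      (hf a x hx).continuousAt.comp (f := fun a => x + γ a)
        (continuous_const.add hγ).continuousAt
  have hderiv : ∀ a, ∀ x ∈ ball x₀ (r / 2), ‖fderiv ℂ f (x + γ a)‖ ≤ 4 * g a / r := by
    intro a x hx
    calc ‖fderiv ℂ f (x + γ a)‖ ≤ 2 * g a / (r / 2) :=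
          norm_fderiv_le_of_forall_mem_ball_norm_le hr2
            (fun w hw => by
              simpa using (hf a _ (hsub a x hx w hw)).differentiableWithinAt)
            (fun w hw => by simpa using hfg a _ (hsub a x hx w hw))
      _ = 4 * g a / r := by field_simp; ring
  have hball : ball x₀ (r / 2) ⊆ ball x₀ r := ball_subset_ball (half_le_self hr.le)
  refine (hasFDerivAt_integral_of_dominated_of_fderiv_le (ball_mem_nhds x₀ hr2)
    (F' := fun x a => fderiv ℂ f (x + γ a)) ?_ ?_ ?_ ?_ ((hg.const_mul 4).div_const r) ?_
    ).differentiableAt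
  · filter_upwards [ball_mem_nhds x₀ hr] with x hx
    exact (hcont x hx).aestronglyMeasurable
  · exact hg.mono' (hcont x₀ (mem_ball_self hr)).aestronglyMeasurable
      (ae_of_all _ fun a => hfg a x₀ (mem_ball_self hr))
  · exact ((measurable_fderiv ℂ f).comp (continuous_const.add hγ).measurable).aestronglyMeasurable
  · exact ae_of_all _ hderiv
  · exact ae_of_all _ fun a x hx =>
      (hf a x (hball hx)).hasFDerivAt.comp x ((hasFDerivAt_id x).add_const (γ a))

end HolomorphicParametricIntegral

section VerticalContourShift

variable {E : Type*} [NormedAddCommGroup E] [NormedSpace ℂ E]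

/-- Cauchy's theorem on the rectangles `[a, b] × [-T, T]`; the horizontal sides vanish as
`T → ∞` because `g → 0` at infinity. -/
theorem integral_add_mul_I_eq_of_differentiableOn {f : ℂ → E} {a b : ℝ} {g : ℝ → ℝ}
    (hf : DifferentiableOn ℂ f (re ⁻¹' [[a, b]]))
    (hfg : ∀ x ∈ [[a, b]], ∀ t : ℝ, ‖f (↑x + ↑t * I)‖ ≤ g t) (hg : Integrable g)
    (hg_lim : Tendsto g (cocompact ℝ) (𝓝 0)) :
    ∫ t : ℝ, f (↑a + ↑t * I) = ∫ t : ℝ, f (↑b + ↑t * I) := by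
  have hint : ∀ x ∈ [[a, b]], Integrable fun t : ℝ => f (↑x + ↑t * I) := fun x hx =>
    hg.mono' (hf.continuousOn.comp_continuous (by fun_prop) fun t => by simpa using hx
      ).aestronglyMeasurable (ae_of_all _ (hfg x hx))
  have hvert (x : ℝ) (hx : x ∈ [[a, b]]) :
      Tendsto (fun T : ℝ => ∫ t in -T..T, f (↑x + ↑t * I)) atTop (𝓝 (∫ t : ℝ, f (↑x + ↑t * I))) :=
    intervalIntegral_tendsto_integral (hint x hx) tendsto_neg_atTop_atBot tendsto_id
  have hhor : Tendsto (fun T : ℝ => ∫ x in a..b, f (↑x + ↑T * I)) (cocompact ℝ) (𝓝 0) := by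
    refine squeeze_zero_norm (fun T => intervalIntegral.norm_integral_le_of_norm_le_const
      fun x hx => hfg x (uIoc_subset_uIcc hx) T) ?_
    simpa using hg_lim.mul_const |b - a|
  have hrect (T : ℝ) :
      I • (∫ t in -T..T, f (↑b + ↑t * I)) - I • ∫ t in -T..T, f (↑a + ↑t * I) =
        (∫ x in a..b, f (↑x + ↑T * I)) - ∫ x in a..b, f (↑x + ↑(-T) * I) := by
    have := integral_boundary_rect_eq_zero_of_differentiableOn f ⟨a, -T⟩ ⟨b, T⟩
      (hf.mono fun w hw => hw.1)
    dsimp only at this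
    linear_combination (norm := module) this
  have hlim := ((hvert b right_mem_uIcc).const_smul I).sub ((hvert a left_mem_uIcc).const_smul I)
  simp only [hrect] at hlim
  have hzero := (hhor.comp atTop_le_cocompact).sub
    (hhor.comp (tendsto_neg_atTop_atBot.mono_right atBot_le_cocompact))
  rw [sub_zero] at hzero
  have := tendsto_nhds_unique hlim hzero
  rw [← smul_sub, smul_eq_zero] at this
  exact (sub_eq_zero.1 (this.resolve_left I_ne_zero)).symm

end VerticalContourShift

theorem tendsto_inv_one_add_sq_cocompact :
    Tendsto (fun t : ℝ => (1 + t ^ 2)⁻¹) (cocompact ℝ) (𝓝 0) := by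
  refine tendsto_inv_atTop_zero.comp (tendsto_atTop_add_const_left _ 1 ?_)
  simpa only [Function.comp_def, Real.norm_eq_abs, sq_abs] using
    (tendsto_pow_atTop two_ne_zero).comp (tendsto_norm_cocompact_atTop (E := ℝ))

def HasVerticalDecay {J : Type*} [Fintype J] (u : J → ℤ) (A₁ A₂ : ℝ) (φ : (J → ℂ) → ℂ) :
    Prop :=
  ∀ K : Set ℝ, IsCompact K → K ⊆ Ioo A₁ A₂ →
    ∃ A C : ℝ, 0 ≤ A ∧ 0 < C ∧ ∀ (z : J → ℂ) (t : ℝ), (∀ j, (z j).re ∈ K) →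
      ‖φ (fun j => z j + (t : ℂ) * (u j : ℂ) * I)‖ ≤ C * (1 + ‖z‖) ^ A * (1 + t ^ 2)⁻¹

section Strip

variable {J : Type*} {A₁ A₂ : ℝ}

theorem isOpen_strip [Finite J] : IsOpen (strip A₁ A₂ : Set (J → ℂ)) := by
  simp only [strip, ofPred_forall]
  exact isOpen_iInter_of_finite fun j => isOpen_Ioo.preimage (by fun_prop)

theorem add_vertical_mem_strip_iff (u : J → ℤ) (z : J → ℂ) (t : ℝ) :
    (fun j => z j + (t : ℂ) * (u j : ℂ) * I) ∈ strip A₁ A₂ ↔ z ∈ strip A₁ A₂ := by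
  simp [strip]

variable [Fintype J] {u : J → ℤ} {φ : (J → ℂ) → ℂ}

/-- The polynomial factor `(1 + ‖z‖) ^ A` of the growth hypothesis is bounded on compact sets. -/
theorem exists_bound_of_isCompact_subset_strip
    (hgrow : HasVerticalDecay u A₁ A₂ φ)
    {S : Set (J → ℂ)} (hS : IsCompact S) (hS_sub : S ⊆ strip A₁ A₂) :
    ∃ B : ℝ, ∀ z ∈ S, ∀ t : ℝ,
      ‖φ (fun j => z j + (t : ℂ) * (u j : ℂ) * I)‖ ≤ B * (1 + t ^ 2)⁻¹ := by
  set K := ⋃ j, (fun z : J → ℂ => (z j).re) '' S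
  have hK : IsCompact K := isCompact_iUnion fun j => hS.image (by fun_prop)
  have hK_sub : K ⊆ Ioo A₁ A₂ := iUnion_subset fun j => image_subset_iff.2 fun z hz => hS_sub hz j
  obtain ⟨A, C, hA, -, hC⟩ := hgrow K hK hK_sub
  obtain ⟨B, hB⟩ := hS.exists_bound_of_continuousOn (f := fun z => C * (1 + ‖z‖) ^ A)
    (Continuous.continuousOn <| continuous_const.mul <|
      (continuous_const.add continuous_norm).rpow_const fun _ => Or.inr hA)
  refine ⟨B, fun z hz t => (hC z t fun j => mem_iUnion.2 ⟨j, z, hz, rfl⟩).trans ?_⟩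
  gcongr
  exact (le_abs_self _).trans (hB z hz)

theorem integrable_vertical (hφ : DifferentiableOn ℂ φ (strip A₁ A₂))
    (hgrow : HasVerticalDecay u A₁ A₂ φ)
    {z : J → ℂ} (hz : z ∈ strip A₁ A₂) :
    Integrable fun t : ℝ => φ (fun j => z j + (t : ℂ) * (u j : ℂ) * I) := by
  obtain ⟨B, hB⟩ := exists_bound_of_isCompact_subset_strip hgrow isCompact_singleton
    (singleton_subset_iff.2 hz)
  exact (integrable_inv_one_add_sq.const_mul B).mono'
    (hφ.continuousOn.comp_continuous (by fun_prop)
      fun t => (add_vertical_mem_strip_iff u z t).2 hz).aestronglyMeasurable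
    (ae_of_all _ (hB z rfl))

theorem norm_shiftedIntegral_le {z : J → ℂ} {M : ℝ}
    (hM : ∀ t : ℝ, ‖φ (fun j => z j + (t : ℂ) * (u j : ℂ) * I)‖ ≤ M * (1 + t ^ 2)⁻¹) :
    ‖shiftedIntegral u φ z‖ ≤ M / 2 := by
  have hint : ‖∫ t : ℝ, φ (fun j => z j + (t : ℂ) * (u j : ℂ) * I)‖ ≤ M * π :=
    calc _ ≤ ∫ t : ℝ, M * (1 + t ^ 2)⁻¹ :=
          norm_integral_le_of_norm_le (integrable_inv_one_add_sq.const_mul M) (ae_of_all _ hM)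
      _ = M * π := by rw [integral_const_mul, integral_univ_inv_one_add_sq]
  rw [shiftedIntegral, norm_mul, norm_real, Real.norm_of_nonneg (by positivity)]
  calc _ ≤ (2 * π)⁻¹ * (M * π) := by gcongr
    _ = M / 2 := by field_simp

theorem differentiableOn_shiftedIntegral (hφ : DifferentiableOn ℂ φ (strip A₁ A₂))
    (hgrow : HasVerticalDecay u A₁ A₂ φ) :
    DifferentiableOn ℂ (shiftedIntegral u φ) (strip A₁ A₂) := by
  intro z hz
  obtain ⟨r, hr, hr_sub⟩ := Metric.isOpen_iff.1 isOpen_strip z hz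
  have hS : closedBall z (r / 2) ⊆ strip A₁ A₂ :=
    (closedBall_subset_ball (half_lt_self hr)).trans hr_sub
  obtain ⟨B, hB⟩ := exists_bound_of_isCompact_subset_strip hgrow (isCompact_closedBall z _) hS
  have hint := differentiableAt_integral_add_of_dominated (μ := volume) (f := φ)
    (γ := fun (t : ℝ) j => (t : ℂ) * (u j : ℂ) * I) (by fun_prop) (half_pos hr)
    (fun t x hx => hφ.differentiableAt <| isOpen_strip.mem_nhds <|
      (add_vertical_mem_strip_iff u x t).2 (hS (ball_subset_closedBall hx)))
    (fun t x hx => hB x (ball_subset_closedBall hx) t) (integrable_inv_one_add_sq.const_mul B)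
  exact (hint.const_mul (((2 * π)⁻¹ : ℝ) : ℂ)).differentiableWithinAt

theorem shiftedIntegral_add_smul (hφ : DifferentiableOn ℂ φ (strip A₁ A₂))
    (hgrow : HasVerticalDecay u A₁ A₂ φ)
    {z : J → ℂ} {s : ℂ} (hz : z ∈ strip A₁ A₂)
    (hzs : (fun j => z j + s * (u j : ℂ)) ∈ strip A₁ A₂) :
    shiftedIntegral u φ (fun j => z j + s * (u j : ℂ)) = shiftedIntegral u φ z := by
  set f : ℂ → ℂ := fun w => φ (fun j => z j + w * (u j : ℂ))
  have hmem_iff (w : ℂ) : (fun j => z j + w * (u j : ℂ)) ∈ strip A₁ A₂ ↔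
      (fun j => z j + (w.re : ℂ) * (u j : ℂ)) ∈ strip A₁ A₂ := by
    simp [strip]
  have hseg : ∀ x ∈ [[0, s.re]], (fun j => z j + (x : ℂ) * (u j : ℂ)) ∈ strip A₁ A₂ := by
    intro x hx j
    have hxu := mem_image_of_mem ((z j).re + ·) (mem_image_of_mem (· * (u j : ℝ)) hx)
    rw [image_mul_const_uIcc, image_const_add_uIcc, zero_mul, add_zero] at hxu
    simpa using ordConnected_Ioo.uIcc_subset (hz j) (by simpa using hzs j) hxu
  have hf : DifferentiableOn ℂ f (re ⁻¹' [[0, s.re]]) := fun w hw =>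
    ((hφ.differentiableAt (isOpen_strip.mem_nhds ((hmem_iff w).2 (hseg _ hw)))).comp w
      (by fun_prop)).differentiableWithinAt
  obtain ⟨B, hB⟩ := exists_bound_of_isCompact_subset_strip hgrow
    (isCompact_uIcc.image (f := fun (x : ℝ) j => z j + (x : ℂ) * (u j : ℂ)) (by fun_prop))
    (image_subset_iff.2 hseg)
  have hfB : ∀ x ∈ [[0, s.re]], ∀ t : ℝ, ‖f (↑x + ↑t * I)‖ ≤ B * (1 + t ^ 2)⁻¹ := by
    intro x hx t
    convert hB _ (mem_image_of_mem _ hx) t using 3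
    ext j
    ring
  have hshift := integral_add_mul_I_eq_of_differentiableOn hf hfB
    (integrable_inv_one_add_sq.const_mul B)
    (by simpa using tendsto_inv_one_add_sq_cocompact.const_mul B)
  simp only [shiftedIntegral]
  congr 1
  calc ∫ t : ℝ, φ (fun j => z j + s * (u j : ℂ) + (t : ℂ) * (u j : ℂ) * I)
      = ∫ t : ℝ, f (↑s.re + ↑(t + s.im) * I) := by
        congr 1; ext t; congr 1; ext j
        conv_lhs => rw [← re_add_im s]
        push_cast
        ring
    _ = ∫ t : ℝ, f (↑(0 : ℝ) + ↑t * I) := by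
        rw [integral_add_right_eq_self (fun t : ℝ => f (↑s.re + ↑t * I)), hshift]
    _ = ∫ t : ℝ, φ (fun j => z j + (t : ℂ) * (u j : ℂ) * I) := by
        congr 1; ext t; show φ _ = φ _; congr 1; ext j
        push_cast
        ring

end Strip

theorem stmt_8_general {J : Type*} [Fintype J] (u : J → ℤ)
    (A₁ A₂ : ℝ) (φ : (J → ℂ) → ℂ)
    (hφ : DifferentiableOn ℂ φ (strip A₁ A₂))
    (hgrow : ∀ K : Set ℝ, IsCompact K → K ⊆ Set.Ioo A₁ A₂ →
      ∃ A C : ℝ, 0 ≤ A ∧ 0 < C ∧ ∀ (z : J → ℂ) (t : ℝ), (∀ j, (z j).re ∈ K) →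
        ‖φ (fun j => z j + (t : ℂ) * (u j : ℂ) * Complex.I)‖ ≤
          C * (1 + ‖z‖) ^ A * (1 + t ^ 2)⁻¹) :
    (∀ z ∈ strip (J := J) A₁ A₂,
        Integrable (fun t : ℝ =>
          φ (fun j => z j + (t : ℂ) * (u j : ℂ) * Complex.I))) ∧
    DifferentiableOn ℂ (shiftedIntegral u φ) (strip A₁ A₂) ∧
    (∀ K : Set ℝ, IsCompact K → K ⊆ Set.Ioo A₁ A₂ →
      ∃ A' C' : ℝ, 0 ≤ A' ∧ 0 < C' ∧ ∀ z : J → ℂ, (∀ j, (z j).re ∈ K) →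
        ‖shiftedIntegral u φ z‖ ≤ C' * (1 + ‖z‖) ^ A') ∧
    (∀ (z : J → ℂ) (s : ℂ), z ∈ strip (J := J) A₁ A₂ →
      (fun j => z j + s * (u j : ℂ)) ∈ strip (J := J) A₁ A₂ →
      shiftedIntegral u φ (fun j => z j + s * (u j : ℂ)) =
        shiftedIntegral u φ z) := by
  refine ⟨fun z hz => integrable_vertical hφ hgrow hz, differentiableOn_shiftedIntegral hφ hgrow,
    fun K hK hK_sub => ?_, fun z s hz hzs => shiftedIntegral_add_smul hφ hgrow hz hzs⟩
  obtain ⟨A, C, hA, hC, hbound⟩ := hgrow K hK hK_sub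
  exact ⟨A, C / 2, hA, half_pos hC, fun z hz =>
    (norm_shiftedIntegral_le fun t => hbound z t hz).trans_eq (by ring)⟩

/-- Basic properties of the shifted integral `ψ = 𝒮(φ)`: absolute convergence,
holomorphy on the strip, polynomial boundedness in vertical strips, and
invariance under translation by `ℂ·u`. -/
theorem stmt_8 {J : Type*} [Fintype J] [Nonempty J] (u : J → ℤ)
    (A₁ A₂ : ℝ) (hA : A₁ < A₂) (φ : (J → ℂ) → ℂ)
    (hφ : DifferentiableOn ℂ φ (strip A₁ A₂))
    (hgrow : ∀ K : Set ℝ, IsCompact K → K ⊆ Set.Ioo A₁ A₂ →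
      ∃ A C : ℝ, 0 ≤ A ∧ 0 < C ∧ ∀ (z : J → ℂ) (t : ℝ), (∀ j, (z j).re ∈ K) →
        ‖φ (fun j => z j + (t : ℂ) * (u j : ℂ) * Complex.I)‖ ≤
          C * (1 + ‖z‖) ^ A * (1 + t ^ 2)⁻¹) :
    (∀ z ∈ strip (J := J) A₁ A₂,
        Integrable (fun t : ℝ =>
          φ (fun j => z j + (t : ℂ) * (u j : ℂ) * Complex.I))) ∧
    DifferentiableOn ℂ (shiftedIntegral u φ) (strip A₁ A₂) ∧
    (∀ K : Set ℝ, IsCompact K → K ⊆ Set.Ioo A₁ A₂ →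
      ∃ A' C' : ℝ, 0 ≤ A' ∧ 0 < C' ∧ ∀ z : J → ℂ, (∀ j, (z j).re ∈ K) →
        ‖shiftedIntegral u φ z‖ ≤ C' * (1 + ‖z‖) ^ A') ∧
    (∀ (z : J → ℂ) (s : ℂ), z ∈ strip (J := J) A₁ A₂ →
      (fun j => z j + s * (u j : ℂ)) ∈ strip (J := J) A₁ A₂ →
      shiftedIntegral u φ (fun j => z j + s * (u j : ℂ)) =
        shiftedIntegral u φ z) :=
  stmt_8_general u A₁ A₂ φ hφ hgrow
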